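/- Let A₁ and A₂ be nonempty compact convex subsets of S^n that are the images of convex cones C₁∖{0} and C₂∖{0} contained in nonzero independent vector subspaces V₁, V₂ of ℝ^{n+1} (V₁ ∩ V₂ = {0}), and let A = A₁ * A₂ be their strict join, a properly convex compact set. If a group G ≤ SL±(n+1,ℝ) acts on A (g(A) = A for every g ∈ G), then G is virtually reducible: G contains a finite-index subgroup that preserves some nonzero proper linear subspace of ℝ^{n+1}. -/

import Mathlib

/-!
Common definitions for formalizing "A classification of ends of properly convex
real projective orbifolds II" (Choi).

We model the projective sphere `S^n` as the unit sphere of `ℝ^{n+1}`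
(the quotient of `ℝ^{n+1} ∖ {0}` by positive scalars), on which matrices of
`GL(n+1,ℝ)` act projectively after radial normalization.  Convexity of subsets
of `S^n` is expressed through convexity of the corresponding radial cones, and
the Hilbert metric is expressed through the standard cone-gauge formula.
Smoothness of strictly convex boundary hypersurfaces is modeled by uniqueness
of supporting hyperplanes (`C¹`) together with strict convexity, and
"open cell" by homeomorphism with a Euclidean space.
-/

open Matrix Set

noncomputable section

namespace CEnds

/-- `ℝ^{n+1}` with its Euclidean structure. -/
abbrev Vn (n : ℕ) := EuclideanSpace ℝ (Fin (n + 1))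

/-- `(n+1) × (n+1)` real matrices. -/
abbrev Mat (n : ℕ) := Matrix (Fin (n + 1)) (Fin (n + 1)) ℝ

/-- the general linear group `GL(n+1, ℝ)`. -/
abbrev GLn (n : ℕ) := Matrix.GeneralLinearGroup (Fin (n + 1)) ℝ

variable {n : ℕ}

/-- the unit-sphere model of the projective sphere `S^n`. -/
def Sph (n : ℕ) : Set (Vn n) := {v : Vn n | ‖v‖ = 1}

/-- the subset `SL±(n+1,ℝ)` of `GL(n+1,ℝ)`: determinant `±1`. -/
def SLpm (n : ℕ) : Set (GLn n) := {g : GLn n | |((g : Mat n)).det| = 1}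

/-- the linear action of a matrix on `ℝ^{n+1}`. -/
def mvec (g : Mat n) (v : Vn n) : Vn n :=
  (EuclideanSpace.equiv (Fin (n + 1)) ℝ).symm (g.mulVec ((EuclideanSpace.equiv (Fin (n + 1)) ℝ) v))

/-- radial normalization to the unit sphere. -/
def nrm (v : Vn n) : Vn n := ‖v‖⁻¹ • v

/-- the projective action of a matrix on the sphere `S^n`. -/
def pact (g : Mat n) (v : Vn n) : Vn n := nrm (mvec g v)

/-- the radial cone (without `0`) over a subset of the sphere. -/
def rayCone (A : Set (Vn n)) : Set (Vn n) := {w | ∃ v ∈ A, ∃ c : ℝ, 0 < c ∧ w = c • v}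

/-- a convex subset of `S^n`: contained in an affine chart and convex there. -/
def IsConvexSub (A : Set (Vn n)) : Prop :=
  A ⊆ Sph n ∧ Convex ℝ (insert (0 : Vn n) (rayCone A)) ∧
    ∃ f : Vn n →ₗ[ℝ] ℝ, ∀ v ∈ A, 0 < f v

/-- a properly convex subset of `S^n`: its closure is compact in an affine chart. -/
def IsPCSub (A : Set (Vn n)) : Prop :=
  A ⊆ Sph n ∧ Convex ℝ (insert (0 : Vn n) (rayCone A)) ∧
    ∃ f : Vn n →ₗ[ℝ] ℝ, ∀ v ∈ closure A, 0 < f v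

/-- relative openness in the sphere `S^n`. -/
def IsOpenInS (A : Set (Vn n)) : Prop := ∃ U : Set (Vn n), IsOpen U ∧ A = U ∩ Sph n

/-- a properly convex domain in `S^n`. -/
def IsPCDom (A : Set (Vn n)) : Prop := IsPCSub A ∧ IsOpenInS A ∧ A.Nonempty

/-- a convex domain in `S^n`. -/
def IsConvexDom (A : Set (Vn n)) : Prop := IsConvexSub A ∧ IsOpenInS A ∧ A.Nonempty

/-- the topological boundary `Bd A` of `A` inside `S^n`. -/
def BdS (A : Set (Vn n)) : Set (Vn n) := closure A ∩ closure (Sph n \ A)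

/-- the interior of `A` inside `S^n`. -/
def IntS (A : Set (Vn n)) : Set (Vn n) :=
  {x | x ∈ A ∧ ∃ ε : ℝ, 0 < ε ∧ ∀ y ∈ Sph n, ‖y - x‖ < ε → y ∈ A}

/-- the closed projective segment between `p` and `q`. -/
def sphSeg (p q : Vn n) : Set (Vn n) :=
  {x | ∃ a b : ℝ, 0 ≤ a ∧ 0 ≤ b ∧ 0 < a + b ∧ x = nrm (a • p + b • q)}

/-- the open projective segment between `p` and `q`. -/
def sphSegOpen (p q : Vn n) : Set (Vn n) :=
  {x | ∃ a b : ℝ, 0 < a ∧ 0 < b ∧ x = nrm (a • p + b • q)}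

/-- the join `{v} * A` of a point and a set. -/
def joinPt (v : Vn n) (A : Set (Vn n)) : Set (Vn n) :=
  {x | ∃ a b : ℝ, ∃ p ∈ A, 0 ≤ a ∧ 0 ≤ b ∧ 0 < a + b ∧ x = nrm (a • v + b • p)}

/-- the strict join `A * B` of two sets. -/
def strictJoin2 (A B : Set (Vn n)) : Set (Vn n) :=
  {x | ∃ a b : ℝ, ∃ p ∈ A, ∃ q ∈ B, 0 ≤ a ∧ 0 ≤ b ∧ 0 < a + b ∧ x = nrm (a • p + b • q)}

/-- the strict join `K 0 * ⋯ * K (k-1)` of a finite family of sets. -/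
def strictJoinF {k : ℕ} (K : Fin k → Set (Vn n)) : Set (Vn n) :=
  {x | ∃ c : Fin k → ℝ, ∃ p : Fin k → Vn n, (∀ i, 0 ≤ c i) ∧ (∀ i, p i ∈ K i) ∧
    (∃ i, 0 < c i) ∧ x = nrm (∑ i, c i • p i)}

/-- `closure Om` is a (nontrivial) strict join. -/
def IsStrictJoinSet (C : Set (Vn n)) : Prop :=
  ∃ (V₁ V₂ : Submodule ℝ (Vn n)) (A B : Set (Vn n)),
    V₁ ⊓ V₂ = ⊥ ∧ A.Nonempty ∧ B.Nonempty ∧ A ⊆ ↑V₁ ∧ B ⊆ ↑V₂ ∧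
    A ⊆ Sph n ∧ B ⊆ Sph n ∧ C = strictJoin2 A B

/-- the sphere `S^{n-1}_v` of directions at `v`. -/
def linkSph (v : Vn n) : Set (Vn n) := {u : Vn n | ‖u‖ = 1 ∧ (inner ℝ u v : ℝ) = 0}

/-- relative openness in the link sphere at `v`. -/
def IsOpenInLink (v : Vn n) (A : Set (Vn n)) : Prop :=
  ∃ U : Set (Vn n), IsOpen U ∧ A = U ∩ linkSph v

/-- the component of `x` orthogonal to the unit vector `v`. -/
def perp (v x : Vn n) : Vn n := x - (inner ℝ x v : ℝ) • v

/-- the linear map induced by `g` on `ℝ^{n+1}/⟨v⟩ ≅ v^⊥` (for `g` fixing the ray of `v`). -/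
def linkMap (g : Mat n) (v x : Vn n) : Vn n := perp v (mvec g x)

/-- the projective action induced by `g` on the link sphere of `v`. -/
def linkAct (g : Mat n) (v u : Vn n) : Vn n := nrm (linkMap g v u)

/-- the boundary of a subset of the link sphere of `v`, inside the link sphere. -/
def BdLink (v : Vn n) (A : Set (Vn n)) : Set (Vn n) := closure A ∩ closure (linkSph v \ A)

/-- the boundary of `A` inside the unit sphere of the linear span of `A`. -/
def relBd (A : Set (Vn n)) : Set (Vn n) :=
  closure A ∩ closure ((Sph n ∩ ((Submodule.span ℝ A : Submodule ℝ (Vn n)) : Set (Vn n))) \ A)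

/-- the relative interior of `A` (interior within the sphere of its span). -/
def relInt (A : Set (Vn n)) : Set (Vn n) := A \ relBd A

/-- the open tube over `Sg ⊆ S^{n-1}_v`: the union of open great segments from `v` to `-v`
in the directions of `Sg`. -/
def tubeCore (v : Vn n) (Sg : Set (Vn n)) : Set (Vn n) :=
  {x | ∃ u ∈ Sg, ∃ t : ℝ, 0 < t ∧ t < Real.pi ∧ x = Real.cos t • v + Real.sin t • u}

/-- the tube `T_v(Sg)`: the closure of the above. -/
def tube (v : Vn n) (Sg : Set (Vn n)) : Set (Vn n) := closure (tubeCore v Sg)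

/-- the open great half-circle from `v` through (the direction of) `x`. -/
def greatRay (v x : Vn n) : Set (Vn n) :=
  {z | ‖z‖ = 1 ∧ ∃ a b : ℝ, 0 < b ∧ z = a • v + b • perp v x}

/-- `R_v(Om)`: the set of directions at `v` of open segments from `v` contained in `Om`. -/
def dirSet (Om : Set (Vn n)) (v : Vn n) : Set (Vn n) :=
  {u | u ∈ linkSph v ∧ ∃ t : ℝ, 0 < t ∧ t < Real.pi ∧
    ∀ s : ℝ, 0 < s → s < t → Real.cos s • v + Real.sin s • u ∈ Om}

/- ### eigenvalue data -/

/-- complexification of a real matrix. -/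
def cplx (g : Mat n) : Matrix (Fin (n + 1)) (Fin (n + 1)) ℂ := g.map (fun x => (x : ℂ))

/-- the set of complex eigenvalues of `g`. -/
def eigSet (g : Mat n) : Set ℂ := (cplx g).charpoly.rootSet ℂ

/-- the largest modulus of the eigenvalues of `g`. -/
def eigMax (g : Mat n) : ℝ := sSup ((fun μ : ℂ => ‖μ‖) '' eigSet g)

/-- the smallest modulus of the eigenvalues of `g`. -/
def eigMin (g : Mat n) : ℝ := sInf ((fun μ : ℂ => ‖μ‖) '' eigSet g)

/-- the scalar by which `g` acts along the ray of `v` (a junk value if `v` is not an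
eigenvector). -/
def eigAt (g : Mat n) (v : Vn n) : ℝ := sSup {c : ℝ | mvec g v = c • v}

/-- `g` fixes the ray over `v`, with a positive eigenvalue. -/
def FixesRay (g : Mat n) (v : Vn n) : Prop := ∃ c : ℝ, 0 < c ∧ mvec g v = c • v

/-- `a` is the attracting fixed point of `g` on `S^n`: the largest eigenvalue-modulus is
attained by a (unique) positive eigenvalue whose eigenspace is the line over `a`. -/
def IsAttractingFP (g : Mat n) (a : Vn n) : Prop :=
  a ∈ Sph n ∧ mvec g a = eigMax g • a ∧
  (∀ b ∈ Sph n, mvec g b = eigMax g • b → b = a ∨ b = -a) ∧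
  (∀ μ ∈ eigSet g, ‖μ‖ = eigMax g → μ = (eigMax g : ℂ))

/-- membership of a complex vector in the complexification of a real subspace. -/
def inCplxSpan (W : Submodule ℝ (Vn n)) (x : Fin (n + 1) → ℂ) : Prop :=
  ((EuclideanSpace.equiv (Fin (n + 1)) ℝ).symm (fun k => (x k).re) ∈ W) ∧
  ((EuclideanSpace.equiv (Fin (n + 1)) ℝ).symm (fun k => (x k).im) ∈ W)

/-- `μ` is an eigenvalue of the restriction of `g` to the invariant subspace `W`. -/
def hasEigOn (g : Mat n) (W : Submodule ℝ (Vn n)) (μ : ℂ) : Prop :=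
  ∃ x : Fin (n + 1) → ℂ, x ≠ 0 ∧ inCplxSpan W x ∧ (cplx g).mulVec x = μ • x

/- ### the Hilbert metric, via the cone gauge -/

/-- the cone gauge `M(x/y) = inf { t > 0 | t•y - x ∈ clo C }`. -/
def cgauge (C : Set (Vn n)) (x y : Vn n) : ℝ :=
  sInf {t : ℝ | 0 < t ∧ t • y - x ∈ closure C}

/-- the Hilbert (cross-ratio) distance on the projectivization of the cone `C`,
`d([x],[y]) = log (M(x/y) M(y/x))`. -/
def hDist (C : Set (Vn n)) (x y : Vn n) : ℝ := Real.log (cgauge C x y * cgauge C y x)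

/-- translation length `leng` of the linear action of `g` on the projectivized cone `C`. -/
def lengLin (C : Set (Vn n)) (g : Mat n) : ℝ :=
  sInf {r : ℝ | ∃ x ∈ C, r = hDist C x (mvec g x)}

/-- translation length of the induced action of `g` on the link of `v`, on the cone `C ⊆ v^⊥`. -/
def lengLink (v : Vn n) (C : Set (Vn n)) (g : Mat n) : ℝ :=
  sInf {r : ℝ | ∃ x ∈ C, r = hDist C x (linkMap g v x)}

/- ### group actions -/

/-- the projective action of a group element on the sphere. -/
def sphAct (g : GLn n) : Vn n → Vn n := pact ((g : Mat n))

/-- the induced action of a group element on the link sphere of `v`. -/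
def lnkAct (v : Vn n) (g : GLn n) : Vn n → Vn n := fun u => linkAct ((g : Mat n)) v u

/-- a properly discontinuous action (with respect to an abstract action `act`). -/
def ProperlyDiscA (act : GLn n → Vn n → Vn n) (Γ : Subgroup (GLn n)) (Om : Set (Vn n)) : Prop :=
  ∀ K : Set (Vn n), K ⊆ Om → IsCompact K →
    {g : GLn n | g ∈ Γ ∧ (act g '' K ∩ K).Nonempty}.Finite

/-- a cocompact action (with respect to an abstract action `act`). -/
def CocompactA (act : GLn n → Vn n → Vn n) (Γ : Subgroup (GLn n)) (Om : Set (Vn n)) : Prop :=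
  ∃ K : Set (Vn n), K ⊆ Om ∧ IsCompact K ∧ ∀ x ∈ Om, ∃ g ∈ Γ, act g x ∈ K

/-- discreteness of a subgroup of `GL(n+1,ℝ)`. -/
def IsDiscreteSubgroup (Γ : Subgroup (GLn n)) : Prop :=
  ∀ K : Set (Mat n), IsCompact K → {g : GLn n | g ∈ Γ ∧ ((g : Mat n)) ∈ K}.Finite

/-- the uniform middle-eigenvalue condition with respect to the fixed point `v`. -/
def UMECat (Γ : Subgroup (GLn n)) (v : Vn n) (Sg : Set (Vn n)) : Prop :=
  ∃ C : ℝ, 1 < C ∧ ∀ g ∈ Γ,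
    C⁻¹ * lengLink v (rayCone Sg) ((g : Mat n)) ≤
        Real.log (eigMax ((g : Mat n)) / eigAt ((g : Mat n)) v) ∧
    Real.log (eigMax ((g : Mat n)) / eigAt ((g : Mat n)) v) ≤
        C * lengLink v (rayCone Sg) ((g : Mat n))

/-- the uniform middle-eigenvalue condition with respect to the invariant hyperplane
`P = w^⊥` (the relevant eigenvalue is the one of `g` on `ℝ^{n+1}/P`, i.e. of `gᵀ` at `w`). -/
def UMECperp (Γ : Subgroup (GLn n)) (w : Vn n) (Sg : Set (Vn n)) : Prop :=
  ∃ C : ℝ, 1 < C ∧ ∀ g ∈ Γ,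
    C⁻¹ * lengLin (rayCone Sg) ((g : Mat n)) ≤
        Real.log (eigMax ((g : Mat n)) / eigAt (((g : Mat n))ᵀ) w) ∧
    Real.log (eigMax ((g : Mat n)) / eigAt (((g : Mat n))ᵀ) w) ≤
        C * lengLin (rayCone Sg) ((g : Mat n))

/-- admissibility of the action of `Γ` on the properly convex domain `Sg`
(with respect to an abstract action `act`): `clo Sg` is a strict join
`K 0 * ⋯ * K (k-1)` of singletons or strictly convex compact sets in independent
subspaces, factor subgroups `G i` act properly discontinuously and cocompactly on the
factors and trivially on the other factors, a virtual center `Z ≅ ℤ^{k-1}` acts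
trivially on each factor, and a finite-index subgroup `Γ'` of `Γ` is isomorphic to
`Z × G 0 × ⋯ × G (k-1)`. -/
def IsAdmissibleA (act : GLn n → Vn n → Vn n) (Γ : Subgroup (GLn n)) (Sg : Set (Vn n)) : Prop :=
  ∃ (k : ℕ) (K : Fin k → Set (Vn n)) (G : Fin k → Subgroup (GLn n)) (Z Γ' : Subgroup (GLn n)),
    0 < k ∧
    closure Sg = strictJoinF K ∧
    (∀ (c : Fin k → ℝ) (p : Fin k → Vn n), (∀ i, p i ∈ K i) →
        (∑ i, c i • p i) = 0 → ∀ i, c i = 0) ∧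
    (∀ i, (∃ x, K i = {x}) ∨ (IsPCSub (K i) ∧ IsCompact (K i) ∧
        ∀ p q : Vn n, p ∈ relBd (K i) → q ∈ relBd (K i) → sphSeg p q ⊆ relBd (K i) → p = q)) ∧
    (∀ i, G i ≤ Γ) ∧
    (∀ i, ∀ g ∈ G i, act g '' K i = K i) ∧
    (∀ i, ProperlyDiscA act (G i) (relInt (K i)) ∧ CocompactA act (G i) (relInt (K i))) ∧
    (∀ i j, j ≠ i → ∀ g ∈ G i, ∀ x ∈ K j, act g x = x) ∧
    Z ≤ Γ ∧ (∀ g ∈ Z, ∀ i, ∀ x ∈ K i, act g x = x) ∧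
    Nonempty (↥Z ≃* Multiplicative (Fin (k - 1) → ℤ)) ∧
    Γ' ≤ Γ ∧ (Γ'.subgroupOf Γ).index ≠ 0 ∧
    Nonempty (↥Γ' ≃* ↥Z × ((i : Fin k) → ↥(G i)))

/-- virtual factorability: some finite-index subgroup has infinite center. -/
def VirtFactorable (Γ : Subgroup (GLn n)) : Prop :=
  ∃ Γ' : Subgroup (GLn n), Γ' ≤ Γ ∧ (Γ'.subgroupOf Γ).index ≠ 0 ∧
    ((Subgroup.center ↥Γ' : Subgroup ↥Γ') : Set ↥Γ').Infinite

/- ### supporting hyperplanes, smoothness and strict convexity -/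

/-- `f` is a supporting linear functional of `A` at `p`. -/
def SuppAt (A : Set (Vn n)) (f : Vn n →ₗ[ℝ] ℝ) (p : Vn n) : Prop :=
  f ≠ 0 ∧ f p = 0 ∧ ∀ x ∈ A, 0 ≤ f x

/-- `A` has a unique supporting hyperplane at `p` (i.e. `Bd A` is `C¹` at `p`). -/
def UniqueSuppAt (A : Set (Vn n)) (p : Vn n) : Prop :=
  (∃ f : Vn n →ₗ[ℝ] ℝ, SuppAt A f p) ∧
    ∀ f f' : Vn n →ₗ[ℝ] ℝ, SuppAt A f p → SuppAt A f' p → ∃ c : ℝ, 0 < c ∧ f' = c • f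

/-- `A` is strictly convex at `p`: no nondegenerate segment of `clo A` has `p` in its
interior. -/
def StrictlyConvexAt (A : Set (Vn n)) (p : Vn n) : Prop :=
  ∀ q r : Vn n, q ∈ closure A → r ∈ closure A → p ∈ sphSegOpen q r → q = r

/-- `A` is a smoothly embedded strictly convex open `d`-cell in the boundary of `L`
(smoothness is modeled by uniqueness of supporting hyperplanes). -/
def IsBoundaryCell (L A : Set (Vn n)) (d : ℕ) : Prop :=
  A.Nonempty ∧ A ⊆ BdS L ∧
  (∀ p ∈ A, UniqueSuppAt L p) ∧
  (∀ p ∈ A, StrictlyConvexAt L p) ∧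
  Nonempty (↥A ≃ₜ EuclideanSpace ℝ (Fin d))

/- ### lenses and lens-cones -/

/-- `L` is a lens with boundary components `A` and `B`. -/
def IsLens (L A B : Set (Vn n)) : Prop :=
  IsPCDom L ∧ BdS L = A ∪ B ∧ Disjoint A B ∧
  IsBoundaryCell L A (n - 1) ∧ IsBoundaryCell L B (n - 1)

/-- `v * L` is a lens-cone over the lens `L` with top `A` and bottom `B`. -/
def IsLensCone (v : Vn n) (L A B : Set (Vn n)) : Prop :=
  IsLens L A B ∧ v ∉ closure L ∧ IsPCSub (joinPt v L) ∧
  joinPt v L = joinPt v A ∧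
  ∀ x ∈ joinPt v L, x ≠ v → ∃! y : Vn n, y ∈ B ∧ y ∈ greatRay v x

/-- `v * L` is a generalized lens-cone over the generalized lens `L` with top `A` and
bottom `B`: the bottom is smooth and strictly convex, while the top is only required to
be the boundary of the cone (minus the vertex). -/
def IsGenLensCone (v : Vn n) (L A B : Set (Vn n)) : Prop :=
  IsPCDom L ∧ v ∉ closure L ∧ IsPCSub (joinPt v L) ∧
  BdS L = A ∪ B ∧ Disjoint A B ∧
  IsBoundaryCell L B (n - 1) ∧
  A = BdS (joinPt v L) ∩ BdS L ∧
  ∀ x ∈ joinPt v L, x ≠ v → ∃! y : Vn n, y ∈ B ∧ y ∈ greatRay v x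

/- ### pseudo-ends -/

/-- `N` is a (radial) p-end neighborhood of the p-end with vertex `v`. -/
def IsPEndNbhd (ΓE : Subgroup (GLn n)) (Om : Set (Vn n)) (v : Vn n) (N : Set (Vn n)) : Prop :=
  N ⊆ Om ∧ IsOpenInS N ∧ N.Nonempty ∧
  (∀ g ∈ ΓE, sphAct g '' N = N) ∧
  (∀ x ∈ N, sphSegOpen v x ⊆ N) ∧
  dirSet N v = dirSet Om v

/-- a properly convex radial pseudo-end (p-R-end) of `Om` with p-end vertex `v`,
p-end fundamental group `ΓE` and p-end neighborhood `N`. -/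
structure IsPREnd (Γ ΓE : Subgroup (GLn n)) (Om : Set (Vn n)) (v : Vn n) (N : Set (Vn n)) :
    Prop where
  v_sph : v ∈ Sph n
  v_bd : v ∈ BdS Om
  sub : ΓE ≤ Γ
  stab : ∀ g ∈ Γ, (sphAct g v = v ↔ g ∈ ΓE)
  nbhd : IsPEndNbhd ΓE Om v N
  dir_pc : IsPCSub (dirSet Om v)
  dir_open : IsOpenInLink v (dirSet Om v)
  dir_ne : (dirSet Om v).Nonempty
  dir_pd : ProperlyDiscA (lnkAct v) ΓE (dirSet Om v)
  dir_cc : CocompactA (lnkAct v) ΓE (dirSet Om v)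

/-- a totally geodesic pseudo-end (p-T-end) of `Om`, with ideal boundary `SE` contained in
the hyperplane `w^⊥`, p-end fundamental group `ΓE` and one-sided p-end neighborhood `U`. -/
structure IsPTEnd (Γ ΓE : Subgroup (GLn n)) (Om : Set (Vn n)) (w : Vn n) (SE U : Set (Vn n)) :
    Prop where
  w_sph : w ∈ Sph n
  SE_sub : SE ⊆ linkSph w
  SE_bd : SE ⊆ BdS Om
  SE_pc : IsPCSub SE
  SE_ne : SE.Nonempty
  SE_open : IsOpenInLink w SE
  sub : ΓE ≤ Γ
  inv : ∀ g ∈ ΓE, sphAct g '' SE = SE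
  pd : ProperlyDiscA sphAct ΓE SE
  cc : CocompactA sphAct ΓE SE
  comp : ∃ x : Vn n, U = connectedComponentIn (Om \ {y : Vn n | (inner ℝ y w : ℝ) = 0}) x
  cl : SE ⊆ closure U

/-- the p-R-end with vertex `v` is of generalized lens type. -/
def IsGenLensTypeR (ΓE : Subgroup (GLn n)) (Om : Set (Vn n)) (v : Vn n) : Prop :=
  ∃ L A B : Set (Vn n), IsGenLensCone v L A B ∧
    (∀ g ∈ ΓE, sphAct g '' L = L) ∧
    IsPEndNbhd ΓE Om v (IntS (joinPt v L) \ {v})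

/-- the p-R-end with vertex `v` is of lens type. -/
def IsLensTypeR (ΓE : Subgroup (GLn n)) (Om : Set (Vn n)) (v : Vn n) : Prop :=
  ∃ L A B : Set (Vn n), IsLensCone v L A B ∧
    (∀ g ∈ ΓE, sphAct g '' L = L) ∧
    IsPEndNbhd ΓE Om v (IntS (joinPt v L) \ {v})

/-- the p-T-end with ideal boundary `SE ⊆ w^⊥` is of lens type: `SE` has a `ΓE`-invariant
lens neighborhood `L` (in an ambient open set), with `L/ΓE` compact, `Bd L ∩ Om` smooth and
strictly convex, and the frontier of `Bd L ∩ Om` contained in the hyperplane. -/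
def IsLensTypeT (ΓE : Subgroup (GLn n)) (Om : Set (Vn n)) (w : Vn n) (SE : Set (Vn n)) : Prop :=
  ∃ L : Set (Vn n), IsPCDom L ∧ SE ⊆ L ∧
    (∀ g ∈ ΓE, sphAct g '' L = L) ∧
    CocompactA sphAct ΓE (closure L) ∧
    (∀ p ∈ BdS L ∩ Om, UniqueSuppAt L p ∧ StrictlyConvexAt L p) ∧
    closure (BdS L ∩ Om) \ (BdS L ∩ Om) ⊆ {y : Vn n | (inner ℝ y w : ℝ) = 0}

/-- `U` is a horoball p-end neighborhood of the p-R-end with vertex `v`. -/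
def IsHoroball (ΓE : Subgroup (GLn n)) (Om : Set (Vn n)) (v : Vn n) (U : Set (Vn n)) : Prop :=
  IsPCDom U ∧ U ⊆ Om ∧ (∀ g ∈ ΓE, sphAct g '' U = U) ∧
  (∀ p ∈ BdS U ∩ Om, UniqueSuppAt U p ∧ StrictlyConvexAt U p) ∧
  closure U ∩ BdS Om = {v}

/- ### strong irreducibility and tameness -/

/-- `g` preserves the linear subspace `W`. -/
def PreservesSubmodule (g : Mat n) (W : Submodule ℝ (Vn n)) : Prop := ∀ x ∈ W, mvec g x ∈ W

/-- `Γ` is strongly irreducible: no finite-index subgroup preserves a nonzero proper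
linear subspace. -/
def IsStronglyIrreducible (Γ : Subgroup (GLn n)) : Prop :=
  ∀ Γ' : Subgroup (GLn n), Γ' ≤ Γ → (Γ'.subgroupOf Γ).index ≠ 0 →
    ∀ W : Submodule ℝ (Vn n), W ≠ ⊥ → W ≠ ⊤ →
      ¬ ∀ g ∈ Γ', PreservesSubmodule ((g : Mat n)) W

/-- `Om/Γ` is strongly tame: there is a `Γ`-invariant closed cocompact core whose
complement is the disjoint union of the `Γ`-translates of finitely many p-end
neighborhoods. -/
def IsStronglyTame (Γ : Subgroup (GLn n)) (Om : Set (Vn n)) : Prop :=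
  ∃ (Om₀ : Set (Vn n)) (m : ℕ) (Nb : Fin m → Set (Vn n)),
    Om₀ ⊆ Om ∧ Om ∩ closure Om₀ ⊆ Om₀ ∧
    (∀ g ∈ Γ, sphAct g '' Om₀ = Om₀) ∧
    CocompactA sphAct Γ Om₀ ∧
    (∀ j, Nb j ⊆ Om \ Om₀) ∧
    (Om \ Om₀ = ⋃ j, ⋃ g ∈ Γ, sphAct g '' Nb j) ∧
    (∀ j j', ∀ g ∈ Γ, ∀ g' ∈ Γ,
      (sphAct g '' Nb j ∩ sphAct g' '' Nb j').Nonempty →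
        sphAct g '' Nb j = sphAct g' '' Nb j')

/- ### duality -/

/-- the dual domain of `A ⊆ S^n` inside the dual sphere (identified with `S^n` via the
inner product): the unit functionals strictly positive on `clo (cone A) ∖ {0}`. -/
def dualDom (A : Set (Vn n)) : Set (Vn n) :=
  {φ | φ ∈ Sph n ∧ ∀ x ∈ closure (rayCone A), x ≠ 0 → 0 < (inner ℝ φ x : ℝ)}

/-- the dual domain, inside the link sphere of `v`, of a set `A` of directions at `v`. -/
def dualLink (v : Vn n) (A : Set (Vn n)) : Set (Vn n) :=
  {φ | φ ∈ linkSph v ∧ ∀ x ∈ closure (rayCone A), x ≠ 0 → 0 < (inner ℝ φ x : ℝ)}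

/-- the dual (inverse transpose) of a group element, acting on the dual sphere. -/
def dualM (g : GLn n) : Mat n := (((g⁻¹ : GLn n) : Mat n))ᵀ

/- ### affine actions -/

/-- the affine chart `A^n` determined by the unit vector `w`. -/
def chartOf (w : Vn n) : Set (Vn n) := {x | x ∈ Sph n ∧ 0 < (inner ℝ x w : ℝ)}

/-- the (oriented) hyperplane with unit normal `φ` supports `U` at the point `x`. -/
def SuppHalf (U : Set (Vn n)) (φ x : Vn n) : Prop :=
  φ ∈ Sph n ∧ (inner ℝ φ x : ℝ) = 0 ∧ ∀ y ∈ U, 0 ≤ (inner ℝ φ y : ℝ)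

/-- the affine action of `Γ` (preserving the chart of `w`) is asymptotically nice with the
properly convex domain `U'` and the compact invariant family `J` of supporting
hyperplanes. -/
def AsympNiceWith (Γ : Subgroup (GLn n)) (w : Vn n) (Om U' J : Set (Vn n)) : Prop :=
  IsPCDom U' ∧ U' ⊆ chartOf w ∧ (∀ g ∈ Γ, sphAct g '' U' = U') ∧
  BdS U' ∩ linkSph w ⊆ closure Om ∧
  J.Nonempty ∧ IsCompact J ∧
  (∀ φ ∈ J, φ ≠ w ∧ φ ≠ -w ∧ ∃ x ∈ BdLink w Om, SuppHalf U' φ x) ∧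
  (∀ g ∈ Γ, pact (dualM g) '' J = J) ∧
  (∀ ψ : Vn n, ψ ∈ linkSph w → (∀ y ∈ Om, 0 ≤ (inner ℝ ψ y : ℝ)) →
    (∃ x ∈ closure Om, (inner ℝ ψ x : ℝ) = 0) →
      ∃ φ ∈ J, ∀ z : Vn n, (inner ℝ z w : ℝ) = 0 → (inner ℝ z ψ : ℝ) = 0 → (inner ℝ z φ : ℝ) = 0)

/-- asymptotically nice affine action. -/
def AsympNice (Γ : Subgroup (GLn n)) (w : Vn n) (Om : Set (Vn n)) : Prop :=
  ∃ U' J : Set (Vn n), AsympNiceWith Γ w Om U' J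

end CEnds

/-!
Let `C` be the cone over `A₁ * A₂`; it is salient and splits as `(C ∩ V₁) ⊕ (C ∩ V₂)`.
Call a subspace `U` a factor of `C` when `C = (C ∩ U) + (C ∩ U')` for a complement `U'` of `U`
and `C ∩ U ≠ 0`. Salience makes `C ∩ U` a face of `C`, so two splittings can be intersected, and
a minimal factor therefore lies on one side of every splitting. Distinct minimal factors are thus
independent, hence finitely many. `G` preserves `C`, so it permutes the minimal factors, and the
stabilizer of a minimal factor contained in `V₁` (proper, as `V₂ ≠ 0`) has finite index in `G`.
-/

namespace CEnds

section ConeFactor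

variable {R V : Type*} [Ring R] [AddCommGroup V] [Module R V]
  {C : AddSubmonoid V} {U U' H H' : Submodule R V}

def ConeSplitting (C : AddSubmonoid V) (U U' : Submodule R V) : Prop :=
  Disjoint U U' ∧ ∀ x ∈ C, ∃ a ∈ C, a ∈ U ∧ ∃ b ∈ C, b ∈ U' ∧ a + b = x

def IsConeFactor (C : AddSubmonoid V) (U : Submodule R V) : Prop :=
  (∃ U', ConeSplitting C U U') ∧ ∃ x ∈ C, x ∈ U ∧ x ≠ 0

theorem ConeSplitting.symm (h : ConeSplitting C U U') : ConeSplitting C U' U := by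
  refine ⟨h.1.symm, fun x hx => ?_⟩
  obtain ⟨a, haC, haU, b, hbC, hbU', rfl⟩ := h.2 x hx
  exact ⟨b, hbC, hbU', a, haC, haU, add_comm b a⟩

theorem ConeSplitting.mem_of_add_mem (hC : ∀ x ∈ C, -x ∈ C → x = 0)
    (h : ConeSplitting C U U') {x y : V} (hx : x ∈ C) (hy : y ∈ C) (hxy : x + y ∈ U) :
    x ∈ U ∧ y ∈ U := by
  obtain ⟨a, haC, haU, b, hbC, hbU', rfl⟩ := h.2 x hx
  obtain ⟨c, hcC, hcU, d, hdC, hdU', rfl⟩ := h.2 y hy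
  have hbd : b + d = 0 := by
    refine Submodule.disjoint_def.mp h.1 _ ?_ (add_mem hbU' hdU')
    convert sub_mem (sub_mem hxy haU) hcU using 1
    abel
  have hb : b = 0 := hC b hbC (by rwa [neg_eq_of_add_eq_zero_right hbd])
  obtain rfl : d = 0 := by rwa [hb, zero_add] at hbd
  subst hb
  simpa using ⟨haU, hcU⟩

theorem ConeSplitting.inf (hC : ∀ x ∈ C, -x ∈ C → x = 0) (hU : ConeSplitting C U U')
    (hH : ConeSplitting C H H') : ConeSplitting C (U ⊓ H) (U ⊓ H' ⊔ U') := by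
  refine ⟨Submodule.disjoint_def.mpr fun v hv hv' => ?_, fun x hx => ?_⟩
  · obtain ⟨u, hu, w, hw, rfl⟩ := Submodule.mem_sup.mp hv'
    obtain rfl : w = 0 :=
      Submodule.disjoint_def.mp hU.1 w (by simpa using sub_mem hv.1 hu.1) hw
    rw [add_zero] at hv ⊢
    exact Submodule.disjoint_def.mp hH.1 u hv.2 hu.2
  · obtain ⟨a, haC, haU, b, hbC, hbU', rfl⟩ := hU.2 x hx
    obtain ⟨a₁, ha₁C, ha₁H, a₂, ha₂C, ha₂H', rfl⟩ := hH.2 a haC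
    obtain ⟨ha₁U, ha₂U⟩ := hU.mem_of_add_mem hC ha₁C ha₂C haU
    exact ⟨a₁, ha₁C, ⟨ha₁U, ha₁H⟩, a₂ + b, add_mem ha₂C hbC,
      Submodule.add_mem_sup ⟨ha₂U, ha₂H'⟩ hbU', (add_assoc _ _ _).symm⟩

theorem le_or_le_of_minimal_isConeFactor (hC : ∀ x ∈ C, -x ∈ C → x = 0)
    (hU : Minimal (IsConeFactor C) U) (hH : ConeSplitting C H H') : U ≤ H ∨ U ≤ H' := by
  obtain ⟨⟨U', hUU'⟩, x, hxC, hxU, hx0⟩ := hU.prop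
  obtain ⟨a, haC, haH, b, hbC, hbH', rfl⟩ := hH.2 x hxC
  obtain ⟨haU, hbU⟩ := hUU'.mem_of_add_mem hC haC hbC hxU
  by_cases ha0 : a = 0
  · subst ha0
    refine Or.inr (inf_eq_left.mp (hU.eq_of_le ?_ inf_le_left))
    exact ⟨⟨_, hUU'.inf hC hH.symm⟩, b, hbC, ⟨hbU, hbH'⟩, by simpa using hx0⟩
  · exact Or.inl (inf_eq_left.mp (hU.eq_of_le ⟨⟨_, hUU'.inf hC hH⟩, a, haC, ⟨haU, haH⟩, ha0⟩
      inf_le_left))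

theorem sSupIndep_setOf_minimal_isConeFactor (hC : ∀ x ∈ C, -x ∈ C → x = 0) :
    sSupIndep {U : Submodule R V | Minimal (IsConeFactor C) U} := by
  intro U hU
  obtain ⟨U', hUU'⟩ := hU.prop.1
  refine hUU'.1.mono_right (sSup_le fun H ⟨hH, hHU⟩ => ?_)
  refine (le_or_le_of_minimal_isConeFactor hC hH hUU').resolve_left fun hle => hHU ?_
  exact hU.eq_of_le hH.prop hle

theorem finite_setOf_minimal_isConeFactor [IsNoetherian R V] (hC : ∀ x ∈ C, -x ∈ C → x = 0) :
    {U : Submodule R V | Minimal (IsConeFactor C) U}.Finite :=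
  WellFoundedGT.finite_of_sSupIndep (sSupIndep_setOf_minimal_isConeFactor hC)

theorem IsConeFactor.map {e : V ≃ₗ[R] V} (he : ∀ x, e x ∈ C ↔ x ∈ C) (hU : IsConeFactor C U) :
    IsConeFactor C (U.map (e : V →ₗ[R] V)) := by
  obtain ⟨⟨U', hUU'⟩, x, hxC, hxU, hx0⟩ := hU
  refine ⟨⟨U'.map (e : V →ₗ[R] V), Submodule.disjoint_map e.injective hUU'.1, fun y hy => ?_⟩,
    e x, (he x).mpr hxC, Submodule.mem_map_of_mem hxU, by simpa using hx0⟩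
  obtain ⟨a, haC, haU, b, hbC, hbU', hab⟩ := hUU'.2 (e.symm y) (by rwa [← he, e.apply_symm_apply])
  exact ⟨e a, (he a).mpr haC, Submodule.mem_map_of_mem haU, e b, (he b).mpr hbC,
    Submodule.mem_map_of_mem hbU', by rw [← map_add, hab, e.apply_symm_apply]⟩

theorem minimal_isConeFactor_map {e : V ≃ₗ[R] V} (he : ∀ x, e x ∈ C ↔ x ∈ C)
    (hU : Minimal (IsConeFactor C) U) : Minimal (IsConeFactor C) (U.map (e : V →ₗ[R] V)) := by
  have he' : ∀ x, e.symm x ∈ C ↔ x ∈ C := fun x => by rw [← he, e.apply_symm_apply]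
  refine ⟨hU.prop.map he, fun H hH hle => ?_⟩
  have hle' : H.map (e.symm : V →ₗ[R] V) ≤ U := by
    rwa [Submodule.map_le_iff_le_comap, Submodule.comap_equiv_eq_map_symm, e.symm_symm]
  rw [Submodule.map_le_iff_le_comap, Submodule.comap_equiv_eq_map_symm]
  exact hU.2 (hH.map he') hle'

end ConeFactor

theorem exists_finiteIndex_fixing_of_finite_orbit {Γ X : Type*} [Group Γ] [MulAction Γ X]
    (G : Subgroup Γ) {x : X} (hx : (MulAction.orbit G x).Finite) :
    ∃ G' ≤ G, (G'.subgroupOf G).index ≠ 0 ∧ ∀ g ∈ G', g • x = x := by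
  refine ⟨(MulAction.stabilizer G x).map G.subtype, Subgroup.map_subtype_le _, ?_, ?_⟩
  · rw [Subgroup.subgroupOf, Subgroup.comap_map_eq_self_of_injective G.subtype_injective,
      MulAction.index_stabilizer]
    exact Set.ncard_ne_zero_of_mem (MulAction.mem_orbit_self x) hx
  · rintro _ ⟨g, hg, rfl⟩
    exact hg

section Join

variable {n : ℕ} {A A₁ A₂ : Set (Vn n)}

def glToLinearEquiv (n : ℕ) : GLn n →* (Vn n ≃ₗ[ℝ] Vn n) :=
  (LinearMap.GeneralLinearGroup.generalLinearEquiv ℝ (Vn n)).toMonoidHom.comp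
    (Units.map (Matrix.toLpLinAlgEquiv (n := Fin (n + 1)) (R := ℝ) 2).toMonoidHom)

open scoped Pointwise in
instance : MulAction (GLn n) (Submodule ℝ (Vn n)) := MulAction.compHom _ (glToLinearEquiv n)

theorem smul_submodule_eq_map (g : GLn n) (W : Submodule ℝ (Vn n)) :
    g • W = W.map (glToLinearEquiv n g : Vn n →ₗ[ℝ] Vn n) :=
  rfl

theorem mvec_eq_glToLinearEquiv (g : GLn n) : mvec (g : Mat n) = glToLinearEquiv n g :=
  rfl

theorem mvec_smul (g : Mat n) (c : ℝ) (v : Vn n) : mvec g (c • v) = c • mvec g v :=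
  map_smul (Matrix.toLpLin 2 2 g) c v

theorem smul_mem_insert_zero_rayCone {c : ℝ} (hc : 0 ≤ c) {x : Vn n}
    (hx : x ∈ insert 0 (rayCone A)) : c • x ∈ insert 0 (rayCone A) := by
  rcases hc.eq_or_lt with rfl | hc
  · simp
  rcases hx with rfl | ⟨v, hv, d, hd, rfl⟩
  · simp
  · exact Or.inr ⟨v, hv, c * d, mul_pos hc hd, smul_smul c d v⟩

theorem mem_insert_zero_rayCone {v : Vn n} (hv : v ∈ A) : v ∈ insert 0 (rayCone A) :=
  Or.inr ⟨v, hv, 1, one_pos, (one_smul ℝ v).symm⟩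

theorem add_mem_insert_zero_rayCone (hA : Convex ℝ (insert 0 (rayCone A))) {x y : Vn n}
    (hx : x ∈ insert 0 (rayCone A)) (hy : y ∈ insert 0 (rayCone A)) :
    x + y ∈ insert 0 (rayCone A) := by
  have hmid := hA hx hy (by norm_num : (0 : ℝ) ≤ 1 / 2) (by norm_num : (0 : ℝ) ≤ 1 / 2)
    (by norm_num)
  convert smul_mem_insert_zero_rayCone zero_le_two hmid using 1
  module

def coneSubmonoid (A : Set (Vn n)) (hA : Convex ℝ (insert 0 (rayCone A))) :
    AddSubmonoid (Vn n) where
  carrier := insert 0 (rayCone A)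
  add_mem' := add_mem_insert_zero_rayCone hA
  zero_mem' := Set.mem_insert _ _

theorem eq_zero_of_mem_insert_zero_rayCone_of_neg_mem {f : Vn n →ₗ[ℝ] ℝ}
    (hf : ∀ v ∈ A, 0 < f v) {x : Vn n} (hx : x ∈ insert 0 (rayCone A))
    (hnx : -x ∈ insert 0 (rayCone A)) : x = 0 := by
  have hpos : ∀ y ∈ rayCone A, 0 < f y := by
    rintro _ ⟨v, hv, c, hc, rfl⟩
    simpa using mul_pos hc (hf v hv)
  rcases hx with rfl | hx
  · rfl
  rcases hnx with h0 | hnx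
  · exact neg_eq_zero.mp h0
  · linarith [hpos x hx, hpos _ hnx, map_neg f x]

theorem rayCone_image_pact (g : Mat n) (A : Set (Vn n)) :
    rayCone (pact g '' A) = mvec g '' rayCone A := by
  ext x
  constructor
  · rintro ⟨_, ⟨v, hv, rfl⟩, c, hc, rfl⟩
    by_cases h0 : mvec g v = 0
    · exact ⟨c • v, ⟨v, hv, c, hc, rfl⟩, by simp [pact, nrm, mvec_smul, h0]⟩
    · refine ⟨(c * ‖mvec g v‖⁻¹) • v, ⟨v, hv, _, by positivity, rfl⟩, ?_⟩
      rw [mvec_smul, pact, nrm, smul_smul]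
  · rintro ⟨_, ⟨v, hv, c, hc, rfl⟩, rfl⟩
    by_cases h0 : mvec g v = 0
    · exact ⟨pact g v, ⟨v, hv, rfl⟩, 1, one_pos, by simp [pact, nrm, mvec_smul, h0]⟩
    · refine ⟨pact g v, ⟨v, hv, rfl⟩, c * ‖mvec g v‖, by positivity, ?_⟩
      rw [mvec_smul, pact, nrm, smul_smul, mul_assoc, mul_inv_cancel₀ (norm_ne_zero_iff.mpr h0),
        mul_one]

theorem glToLinearEquiv_mem_insert_zero_rayCone_iff {g : GLn n} (hg : sphAct g '' A = A)
    (x : Vn n) :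
    glToLinearEquiv n g x ∈ insert 0 (rayCone A) ↔ x ∈ insert 0 (rayCone A) := by
  have himage : glToLinearEquiv n g '' insert 0 (rayCone A) = insert 0 (rayCone A) := by
    rw [Set.image_insert_eq, map_zero, ← mvec_eq_glToLinearEquiv, ← rayCone_image_pact]
    exact congrArg (fun s => insert 0 (rayCone s)) hg
  conv_lhs => rw [← himage]
  exact (glToLinearEquiv n g).injective.mem_set_image

theorem subset_strictJoin2_left (hA₁s : A₁ ⊆ Sph n) (hA₂ : A₂.Nonempty) :
    A₁ ⊆ strictJoin2 A₁ A₂ := by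
  intro p hp
  obtain ⟨q, hq⟩ := hA₂
  refine ⟨1, 0, p, hp, q, hq, zero_le_one, le_rfl, by norm_num, ?_⟩
  simp [nrm, show ‖p‖ = 1 from hA₁s hp]

theorem subset_strictJoin2_right (hA₂s : A₂ ⊆ Sph n) (hA₁ : A₁.Nonempty) :
    A₂ ⊆ strictJoin2 A₁ A₂ := by
  intro q hq
  obtain ⟨p, hp⟩ := hA₁
  refine ⟨0, 1, p, hp, q, hq, le_rfl, zero_le_one, by norm_num, ?_⟩
  simp [nrm, show ‖q‖ = 1 from hA₂s hq]

theorem coneSplitting_strictJoin2 {V₁ V₂ : Submodule ℝ (Vn n)} (hV : V₁ ⊓ V₂ = ⊥)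
    (hA₁ : A₁.Nonempty) (hA₂ : A₂.Nonempty) (hA₁s : A₁ ⊆ Sph n) (hA₂s : A₂ ⊆ Sph n)
    (hA₁V : A₁ ⊆ V₁) (hA₂V : A₂ ⊆ V₂) (hJ : Convex ℝ (insert 0 (rayCone (strictJoin2 A₁ A₂)))) :
    ConeSplitting (coneSubmonoid (strictJoin2 A₁ A₂) hJ) V₁ V₂ := by
  refine ⟨disjoint_iff.mpr hV, ?_⟩
  rintro _ (rfl | ⟨_, ⟨a, b, p, hp, q, hq, ha, hb, -, rfl⟩, c, hc, rfl⟩)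
  · exact ⟨0, zero_mem _, zero_mem _, 0, zero_mem _, zero_mem _, add_zero 0⟩
  have hcoef : 0 ≤ c * ‖a • p + b • q‖⁻¹ := by positivity
  refine ⟨(c * ‖a • p + b • q‖⁻¹ * a) • p, ?_, V₁.smul_mem _ (hA₁V hp),
    (c * ‖a • p + b • q‖⁻¹ * b) • q, ?_, V₂.smul_mem _ (hA₂V hq), ?_⟩
  · exact smul_mem_insert_zero_rayCone (mul_nonneg hcoef ha)
      (mem_insert_zero_rayCone (subset_strictJoin2_left hA₁s hA₂ hp))
  · exact smul_mem_insert_zero_rayCone (mul_nonneg hcoef hb)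
      (mem_insert_zero_rayCone (subset_strictJoin2_right hA₂s hA₁ hq))
  · simp only [nrm]
    module

end Join

theorem join_virtually_reducible_general
    (n : ℕ)
    (V₁ V₂ : Submodule ℝ (Vn n)) (hV : V₁ ⊓ V₂ = ⊥)
    (hV₂ : V₂ ≠ ⊥)
    (A₁ A₂ : Set (Vn n))
    (hA₁ : A₁.Nonempty) (hA₂ : A₂.Nonempty)
    (hA₁s : A₁ ⊆ Sph n) (hA₂s : A₂ ⊆ Sph n)
    (hA₁V : A₁ ⊆ (V₁ : Set (Vn n))) (hA₂V : A₂ ⊆ (V₂ : Set (Vn n)))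
    (hpc : IsPCSub (strictJoin2 A₁ A₂))
    (G : Subgroup (GLn n))
    (hact : ∀ g ∈ G, sphAct g '' strictJoin2 A₁ A₂ = strictJoin2 A₁ A₂) :
    ∃ G' : Subgroup (GLn n), G' ≤ G ∧ (G'.subgroupOf G).index ≠ 0 ∧
      ∃ W : Submodule ℝ (Vn n), W ≠ ⊥ ∧ W ≠ ⊤ ∧
        ∀ g ∈ G', PreservesSubmodule ((g : Mat n)) W := by
  obtain ⟨-, hJ, f, hf⟩ := hpc
  set C := coneSubmonoid (strictJoin2 A₁ A₂) hJ
  have hC : ∀ x ∈ C, -x ∈ C → x = 0 := fun x =>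
    eq_zero_of_mem_insert_zero_rayCone_of_neg_mem fun v hv => hf v (subset_closure hv)
  have hsplit : ConeSplitting C V₁ V₂ :=
    coneSplitting_strictJoin2 hV hA₁ hA₂ hA₁s hA₂s hA₁V hA₂V hJ
  obtain ⟨p, hp⟩ := hA₁
  have hV₁C : IsConeFactor C V₁ :=
    ⟨⟨V₂, hsplit⟩, p, mem_insert_zero_rayCone (subset_strictJoin2_left hA₁s hA₂ hp), hA₁V hp,
      norm_ne_zero_iff.mp (by simp [show ‖p‖ = 1 from hA₁s hp])⟩
  obtain ⟨W, hWV₁, hW⟩ := exists_minimal_le_of_wellFoundedLT (IsConeFactor C) V₁ hV₁C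
  have horbit : (MulAction.orbit G W).Finite := (finite_setOf_minimal_isConeFactor hC).subset <| by
    rintro _ ⟨g, rfl⟩
    exact minimal_isConeFactor_map (glToLinearEquiv_mem_insert_zero_rayCone_iff (hact g g.2)) hW
  obtain ⟨G', hG'G, hindex, hG'W⟩ := exists_finiteIndex_fixing_of_finite_orbit G horbit
  refine ⟨G', hG'G, hindex, W, ?_, ?_, fun g hg x hx => ?_⟩
  · obtain ⟨-, x, -, hx, hx0⟩ := hW.prop
    exact (Submodule.ne_bot_iff W).mpr ⟨x, hx, hx0⟩
  · exact ne_top_of_le_ne_top (fun h => hV₂ (by simpa [h] using hV)) hWV₁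
  · rw [← hG'W g hg, smul_submodule_eq_map]
    exact Submodule.mem_map_of_mem hx

/-- Proposition 5.7: a group acting on a strict join is virtually
reducible. -/
theorem join_virtually_reducible
    (n : ℕ) (hn : 2 ≤ n)
    (V₁ V₂ : Submodule ℝ (Vn n)) (hV : V₁ ⊓ V₂ = ⊥)
    (hV₁ : V₁ ≠ ⊥) (hV₂ : V₂ ≠ ⊥)
    (A₁ A₂ : Set (Vn n))
    (hA₁ : A₁.Nonempty) (hA₂ : A₂.Nonempty)
    (hA₁c : IsCompact A₁) (hA₂c : IsCompact A₂)
    (hA₁s : A₁ ⊆ Sph n) (hA₂s : A₂ ⊆ Sph n)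
    (hA₁V : A₁ ⊆ (V₁ : Set (Vn n))) (hA₂V : A₂ ⊆ (V₂ : Set (Vn n)))
    (hA₁cv : Convex ℝ (insert (0 : Vn n) (rayCone A₁)))
    (hA₂cv : Convex ℝ (insert (0 : Vn n) (rayCone A₂)))
    (hpc : IsPCSub (strictJoin2 A₁ A₂))
    (G : Subgroup (GLn n)) (hSL : ∀ g ∈ G, g ∈ SLpm n)
    (hact : ∀ g ∈ G, sphAct g '' strictJoin2 A₁ A₂ = strictJoin2 A₁ A₂) :
    ∃ G' : Subgroup (GLn n), G' ≤ G ∧ (G'.subgroupOf G).index ≠ 0 ∧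
      ∃ W : Submodule ℝ (Vn n), W ≠ ⊥ ∧ W ≠ ⊤ ∧
        ∀ g ∈ G', PreservesSubmodule ((g : Mat n)) W :=
  join_virtually_reducible_general n V₁ V₂ hV hV₂ A₁ A₂ hA₁ hA₂ hA₁s hA₂s hA₁V hA₂V hpc G hact

end CEnds
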